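/- arXiv:2110.06051 — 2 statements merged into one kernel-verified Lean document; each statement's English description precedes it below -/
import Mathlib

section
/- Let s_S : Fin n → ℝ be sparse scores sorted in decreasing order, s_D : Fin n → ℝ be dense scores, α ∈ [0,1], and φ i = α * s_S i + (1-α) * s_D i be interpolated scores. Let M be an upper bound on all dense scores (s_D i ≤ M for all i). If after processing the first m ≥ k indices the k-th largest value t among {φ 0, ..., φ (m-1)} satisfies α * s_S m + (1-α) * M ≤ t, then every unprocessed index j ≥ m satisfies φ j ≤ t; hence the top-k interpolated scores over all n indices are exactly the top-k among the first m processed indices. -/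
/-!
Since `s_S` is antitone and `s_D ≤ M`, every unprocessed score is at most
`α s_S(m) + (1 - α) M ≤ t`. Appending values that are all at most the `k`-th largest
element of a list does not change its top `k`, because the descending sort of the
whole list is the top `k` followed by the sort of everything else.
-/

namespace List

theorem rel_of_mem_take_of_getElem?_eq {α : Type*} {R : α → α → Prop} [Std.Refl R]
    {l : List α} (hl : l.Pairwise R) {k : ℕ} {t a : α} (ht : l[k - 1]? = some t)
    (ha : a ∈ l.take k) : R a t := by
  obtain ⟨hkl, rfl⟩ := getElem?_eq_some_iff.mp ht
  obtain ⟨i, hi, rfl⟩ := mem_take_iff_getElem.mp ha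
  exact hl.rel_get_of_le (a := ⟨i, by omega⟩) (b := ⟨k - 1, hkl⟩) (by simp; omega)

theorem take_insertionSort_append_of_forall_le {α : Type*} [LinearOrder α] {l₁ l₂ : List α}
    {k : ℕ} (hk : k ≤ l₁.length)
    (h : ∀ a ∈ (l₁.insertionSort (· ≥ ·)).take k, ∀ b ∈ l₂, b ≤ a) :
    ((l₁ ++ l₂).insertionSort (· ≥ ·)).take k = (l₁.insertionSort (· ≥ ·)).take k := by
  set S := l₁.insertionSort (· ≥ ·)
  have hS : S.Pairwise (· ≥ ·) := pairwise_insertionSort _ _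
  have hsplit : (l₁ ++ l₂).insertionSort (· ≥ ·) =
      S.take k ++ (S.drop k ++ l₂).insertionSort (· ≥ ·) := by
    refine Perm.eq_of_pairwise' (pairwise_insertionSort _ _) ?_ ?_
    · rw [← take_append_drop k S] at hS
      refine pairwise_append.mpr ⟨(pairwise_append.mp hS).1, pairwise_insertionSort _ _, ?_⟩
      intro a ha b hb
      rcases mem_append.mp ((perm_insertionSort _ _).mem_iff.mp hb) with hb | hb
      · exact (pairwise_append.mp hS).2.2 a ha b hb
      · exact h a ha b hb
    · calc (l₁ ++ l₂).insertionSort (· ≥ ·) ~ S ++ l₂ :=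
            (perm_insertionSort _ _).trans ((perm_insertionSort _ _).symm.append_right _)
        _ = S.take k ++ (S.drop k ++ l₂) := by rw [← append_assoc, take_append_drop]
        _ ~ _ := (perm_insertionSort _ _).symm.append_left _
  rw [hsplit, take_left' (by simp [S, hk])]

end List

theorem early_stopping_correct_general {n k m : ℕ} (hkm : k ≤ m)
    (hmn : m < n) (sS sD : Fin n → ℝ) (M α : ℝ)
    (hanti : Antitone sS) (hM : ∀ i, sD i ≤ M) (hα : α ∈ Set.Icc (0 : ℝ) 1)
    (φ : Fin n → ℝ) (hφ : ∀ i, φ i = α * sS i + (1 - α) * sD i)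
    (t : ℝ)
    (ht : (((List.ofFn fun i : Fin m => φ (Fin.castLE hmn.le i)).insertionSort
      (· ≥ ·))[k - 1]?) = some t)
    (hstop : α * sS ⟨m, hmn⟩ + (1 - α) * M ≤ t) :
    (∀ j : Fin n, m ≤ j.val → φ j ≤ t) ∧
      (↑(((List.ofFn φ).insertionSort (· ≥ ·)).take k) : Multiset ℝ) =
        ↑(((List.ofFn fun i : Fin m => φ (Fin.castLE hmn.le i)).insertionSort
          (· ≥ ·)).take k) := by
  have tail_le : ∀ j : Fin n, m ≤ j.val → φ j ≤ t := fun j hj => by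
    obtain ⟨hα0, hα1⟩ := hα
    have hsS : sS j ≤ sS ⟨m, hmn⟩ := hanti hj
    calc φ j = α * sS j + (1 - α) * sD j := hφ j
      _ ≤ α * sS ⟨m, hmn⟩ + (1 - α) * M := by gcongr; exact hM j
      _ ≤ t := hstop
  refine ⟨tail_le, ?_⟩
  have hprefix : List.ofFn (fun i : Fin m => φ (Fin.castLE hmn.le i)) = (List.ofFn φ).take m :=
    Fin.ofFn_take_eq_take_ofFn hmn.le φ
  rw [hprefix] at ht ⊢
  conv_lhs => rw [← List.take_append_drop m (List.ofFn φ)]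
  rw [List.take_insertionSort_append_of_forall_le (by simp; omega)]
  intro a ha b hb
  have hbt : b ≤ t := by
    obtain ⟨j, hj, rfl⟩ := List.mem_drop_iff_getElem.mp hb
    simpa using tail_le ⟨m + j, by simpa [add_comm] using hj⟩ (by simp)
  have hta : t ≤ a := by
    simpa using List.rel_of_mem_take_of_getElem?_eq (List.pairwise_insertionSort _ _) ht ha
  exact hbt.trans hta

/-- Correctness of early stopping with a true upper bound `M` on the dense
scores: if the stopping criterion `α * s_S m + (1 - α) * M ≤ t` holds, where
`t` is the `k`-th largest interpolated score among the first `m` processed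
indices, then all unprocessed scores are at most `t` and the top-`k`
interpolated scores over all `n` indices are exactly the top-`k` among the
first `m`. -/
theorem early_stopping_correct {n k m : ℕ} (hk : 1 ≤ k) (hkm : k ≤ m)
    (hmn : m < n) (sS sD : Fin n → ℝ) (M α : ℝ)
    (hanti : Antitone sS) (hM : ∀ i, sD i ≤ M) (hα : α ∈ Set.Icc (0 : ℝ) 1)
    (φ : Fin n → ℝ) (hφ : ∀ i, φ i = α * sS i + (1 - α) * sD i)
    (t : ℝ)
    (ht : (((List.ofFn fun i : Fin m => φ (Fin.castLE hmn.le i)).insertionSort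
      (· ≥ ·))[k - 1]?) = some t)
    (hstop : α * sS ⟨m, hmn⟩ + (1 - α) * M ≤ t) :
    (∀ j : Fin n, m ≤ j.val → φ j ≤ t) ∧
      (↑(((List.ofFn φ).insertionSort (· ≥ ·)).take k) : Multiset ℝ) =
        ↑(((List.ofFn fun i : Fin m => φ (Fin.castLE hmn.le i)).insertionSort
          (· ≥ ·)).take k) :=
  early_stopping_correct_general hkm hmn sS sD M α hanti hM hα φ hφ t ht hstop
end

section
/- Let f : Fin n → ℝ and k ≤ m ≤ n. Suppose t is the k-th largest value among f restricted to indices < m, and suppose f j ≤ t for all indices j with m ≤ j < n. Then the multiset of the k largest values of f over all of Fin n equals the multiset of the k largest values of f over indices < m. -/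
/-!
Let `s` be the prefix scores sorted decreasingly, so `t = s[k-1]`. The first `k` entries of `s`
are `≥ t`, while the rest of `s` and all tail scores are `≤ t`. Hence `s.take k` followed by the
sorted remainder is a decreasing permutation of all scores, and by uniqueness of decreasing
arrangements it is the sorted list of all scores; its first `k` entries are `s.take k`.
-/

namespace List

section Relation

variable {α : Type*} {r : α → α → Prop} [DecidableRel r] [Std.Total r] [IsTrans α r]
  [Std.Antisymm r]

theorem insertionSort_eq_of_perm {l l' : List α} (h : l ~ l') :
    l.insertionSort r = l'.insertionSort r :=
  ((perm_insertionSort r l).trans (h.trans (perm_insertionSort r l').symm)).eq_of_pairwise'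
    (pairwise_insertionSort r l) (pairwise_insertionSort r l')

theorem insertionSort_append_of_forall_rel {l₁ l₂ : List α} (h₁ : l₁.Pairwise r)
    (h : ∀ x ∈ l₁, ∀ y ∈ l₂, r x y) :
    (l₁ ++ l₂).insertionSort r = l₁ ++ l₂.insertionSort r :=
  ((perm_insertionSort r _).trans ((perm_insertionSort r l₂).symm.append_left l₁)).eq_of_pairwise'
    (pairwise_insertionSort r _)
    (pairwise_append.2 ⟨h₁, pairwise_insertionSort r l₂,
      fun x hx y hy => h x hx y ((mem_insertionSort r).1 hy)⟩)

end Relation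

section LinearOrder

variable {α : Type*} [LinearOrder α]

theorem SortedGE.getElem_le_of_mem_take {l : List α} (hl : l.SortedGE) {j k : ℕ}
    (hj : j < l.length) (hjk : k ≤ j + 1) {x : α} (hx : x ∈ l.take k) : l[j] ≤ x := by
  obtain ⟨i, hi, rfl⟩ := mem_take_iff_getElem.1 hx
  exact hl.getElem_ge_getElem_of_le (by omega)

theorem SortedGE.le_getElem_of_mem_drop {l : List α} (hl : l.SortedGE) {j k : ℕ}
    (hj : j < l.length) (hjk : j ≤ k) {x : α} (hx : x ∈ l.drop k) : x ≤ l[j] := by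
  obtain ⟨i, hi, rfl⟩ := mem_drop_iff_getElem.1 hx
  exact hl.getElem_ge_getElem_of_le (by omega)

theorem take_insertionSort_ge_append_of_forall_le {l₁ l₂ : List α} {k : ℕ} {t : α}
    (ht : (l₁.insertionSort (· ≥ ·))[k - 1]? = some t) (hl₂ : ∀ y ∈ l₂, y ≤ t) :
    ((l₁ ++ l₂).insertionSort (· ≥ ·)).take k = (l₁.insertionSort (· ≥ ·)).take k := by
  set s := l₁.insertionSort (· ≥ ·)
  have hs : s.SortedGE := sortedGE_insertionSort
  obtain ⟨hlen, rfl⟩ := getElem?_eq_some_iff.1 ht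
  have hhead : ∀ x ∈ s.take k, s[k - 1] ≤ x := fun x => hs.getElem_le_of_mem_take hlen (by omega)
  have hrest : ∀ y ∈ s.drop k ++ l₂, y ≤ s[k - 1] := by
    intro y hy
    rcases mem_append.1 hy with hy | hy
    exacts [hs.le_getElem_of_mem_drop hlen (by omega) hy, hl₂ y hy]
  have hperm : l₁ ++ l₂ ~ s.take k ++ (s.drop k ++ l₂) := by
    rw [← append_assoc, take_append_drop]
    exact (perm_insertionSort _ l₁).symm.append_right l₂
  rw [insertionSort_eq_of_perm hperm,
    insertionSort_append_of_forall_rel (hs.pairwise.sublist (take_sublist _ _))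
      fun x hx y hy => (hrest y hy).trans (hhead x hx),
    take_left' (length_take_of_le (by omega))]

end LinearOrder

end List

theorem topk_eq_of_tail_le_general {n k m : ℕ} (hmn : m ≤ n)
    (f : Fin n → ℝ) (t : ℝ)
    (ht : (((List.ofFn fun i : Fin m => f (Fin.castLE hmn i)).insertionSort
      (· ≥ ·))[k - 1]?) = some t)
    (htail : ∀ j : Fin n, m ≤ j.val → f j ≤ t) :
    (↑(((List.ofFn f).insertionSort (· ≥ ·)).take k) : Multiset ℝ) =
      ↑(((List.ofFn fun i : Fin m => f (Fin.castLE hmn i)).insertionSort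
        (· ≥ ·)).take k) := by
  have hprefix : List.ofFn (fun i : Fin m => f (Fin.castLE hmn i)) = (List.ofFn f).take m :=
    Fin.ofFn_take_eq_take_ofFn hmn f
  have hsuffix : ∀ y ∈ (List.ofFn f).drop m, y ≤ t := by
    intro y hy
    obtain ⟨i, hi, rfl⟩ := List.mem_drop_iff_getElem.1 hy
    simp only [List.length_ofFn] at hi
    simpa using htail ⟨m + i, by omega⟩ (by simp)
  rw [← List.take_insertionSort_ge_append_of_forall_le ht hsuffix, hprefix, List.take_append_drop]

/-- Abstract correctness of early stopping: if `t` is the `k`-th largest value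
among the first `m` scores and every remaining score is at most `t`, then the
multiset of the `k` largest scores overall equals the multiset of the `k`
largest scores among the first `m`. -/
theorem topk_eq_of_tail_le {n k m : ℕ} (hk : 1 ≤ k) (hkm : k ≤ m) (hmn : m ≤ n)
    (f : Fin n → ℝ) (t : ℝ)
    (ht : (((List.ofFn fun i : Fin m => f (Fin.castLE hmn i)).insertionSort
      (· ≥ ·))[k - 1]?) = some t)
    (htail : ∀ j : Fin n, m ≤ j.val → f j ≤ t) :
    (↑(((List.ofFn f).insertionSort (· ≥ ·)).take k) : Multiset ℝ) =
      ↑(((List.ofFn fun i : Fin m => f (Fin.castLE hmn i)).insertionSort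
        (· ≥ ·)).take k) :=
  topk_eq_of_tail_le_general hmn f t ht htail
end
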